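/- arXiv:1907.02145 — 2 statements merged into one kernel-verified Lean document; each statement's English description precedes it below -/
import Mathlib

section
/- Let A₁, A₂, B be symmetric n×n real matrices with A₁ and A₂ positive semidefinite. Then tr[A₁ B A₂ B] ≤ tr[A₁|B|] · tr[A₂|B|], where |B| denotes the matrix obtained from B by replacing each eigenvalue with its absolute value. -/
open Matrix

/-- `|B|`: the matrix obtained by replacing each eigenvalue of the symmetric matrix `B`
by its absolute value, realized as the PSD square root of `Bᴴ * B`. -/
noncomputable def matAbs {n : ℕ} (B : Matrix (Fin n) (Fin n) ℝ) : Matrix (Fin n) (Fin n) ℝ :=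
  (Matrix.posSemidef_conjTranspose_mul_self B).1.eigenvectorUnitary.1 *
    diagonal ((↑) ∘ (√·) ∘ (Matrix.posSemidef_conjTranspose_mul_self B).1.eigenvalues) *
    (star (Matrix.posSemidef_conjTranspose_mul_self B).1.eigenvectorUnitary : Matrix (Fin n) (Fin n) ℝ)

/-- operator norm (largest singular value) of a matrix. -/
noncomputable def opNorm {n : ℕ} (M : Matrix (Fin n) (Fin n) ℝ) : ℝ :=
  ‖Matrix.toEuclideanCLM (𝕜 := ℝ) M‖

/-!
Write `B = R * S * R` with `R = √|B|` and `S = sign B`, both functions of `B`, so that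
`R * R = |B|` and `S * S * R = R`. Cycling the trace,
`tr (A₁ B A₂ B) = tr ((R A₁ R) (S R A₂ R S))` is the trace of a product of two positive
semidefinite matrices `C, D`, and `tr (C D) ≤ tr C * tr D` because `C ≤ (tr C) • 1`.
The two traces on the right are `tr (A₁ |B|)` and `tr (A₂ |B|)`.
-/

open scoped MatrixOrder

namespace Matrix

variable {m : Type*} [Fintype m] [DecidableEq m]

lemma PosSemidef.le_trace_smul_one {C : Matrix m m ℝ} (hC : C.PosSemidef) :
    C ≤ C.trace • (1 : Matrix m m ℝ) := by
  rw [← Algebra.algebraMap_eq_smul_one]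
  refine le_algebraMap_of_spectrum_le fun x hx => ?_
  obtain ⟨i, rfl⟩ := hC.1.spectrum_real_eq_range_eigenvalues ▸ hx
  rw [hC.1.trace_eq_sum_eigenvalues]
  exact Finset.single_le_sum (fun j _ => hC.eigenvalues_nonneg j) (Finset.mem_univ i)

lemma PosSemidef.trace_mul_le_trace_mul_trace {C D : Matrix m m ℝ} (hC : C.PosSemidef)
    (hD : D.PosSemidef) : (C * D).trace ≤ C.trace * D.trace := by
  obtain ⟨R, rfl⟩ := CStarAlgebra.nonneg_iff_eq_star_mul_self.mp hD.nonneg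
  calc (C * (star R * R)).trace = (R * C * star R).trace := by
        rw [← mul_assoc, trace_mul_comm, mul_assoc]
    _ ≤ (R * (C.trace • 1) * star R).trace :=
        OrderHomClass.mono (tracePositiveLinearMap m ℝ ℝ)
          (star_right_conjugate_le_conjugate hC.le_trace_smul_one R)
    _ = C.trace * (star R * R).trace := by
        rw [mul_smul_comm, mul_one, smul_mul_assoc, trace_smul, trace_mul_comm, smul_eq_mul]

lemma PosSemidef.trace_mul_mul_mul_le_of_eq_mul_mul {A₁ A₂ B R S : Matrix m m ℝ}
    (hA₁ : A₁.PosSemidef) (hA₂ : A₂.PosSemidef) (hR : IsSelfAdjoint R) (hS : IsSelfAdjoint S)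
    (hB : B = R * S * R) (hSSR : S * S * R = R) :
    (A₁ * B * A₂ * B).trace ≤ (A₁ * (R * R)).trace * (A₂ * (R * R)).trace := by
  have hRAR (A : Matrix m m ℝ) : (R * A * R).trace = (A * (R * R)).trace := by
    rw [trace_mul_cycle, trace_mul_comm]
  have hSRA₂RS : (S * (R * A₂ * R) * S).trace = (A₂ * (R * R)).trace := by
    rw [trace_mul_cycle, ← mul_assoc, ← mul_assoc, hSSR, hRAR]
  calc (A₁ * B * A₂ * B).trace = (R * A₁ * R * (S * (R * A₂ * R) * S)).trace := by
        rw [hB, ← mul_assoc (A₁ * _ * A₂) (R * S) R, trace_mul_comm _ R]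
        simp only [mul_assoc]
    _ ≤ (R * A₁ * R).trace * (S * (R * A₂ * R) * S).trace :=
        PosSemidef.trace_mul_le_trace_mul_trace (hR.conjugate_nonneg hA₁.nonneg).posSemidef
          (hS.conjugate_nonneg (hR.conjugate_nonneg hA₂.nonneg)).posSemidef
    _ = (A₁ * (R * R)).trace * (A₂ * (R * R)).trace := by rw [hRAR, hSRA₂RS]

variable {B : Matrix m m ℝ}

-- The spectrum of a matrix is finite, so `cfc` may be applied to the discontinuous `sign`.
lemma cfc_sqrt_abs_mul_cfc_sign_mul_cfc_sqrt_abs (hB : IsSelfAdjoint B) :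
    cfc (fun t => √|t|) B * cfc (fun t => (SignType.sign t : ℝ)) B * cfc (fun t => √|t|) B = B := by
  have hfin := B.finite_real_spectrum
  rw [← cfc_mul (hf := hfin.continuousOn _) (hg := hfin.continuousOn _),
    ← cfc_mul (hf := hfin.continuousOn _) (hg := hfin.continuousOn _)]
  conv_rhs => rw [← cfc_id' ℝ B]
  refine cfc_congr fun t _ => ?_
  rw [mul_right_comm, Real.mul_self_sqrt (abs_nonneg t), abs_mul_sign]

lemma cfc_sign_mul_cfc_sign_mul_cfc_sqrt_abs :
    cfc (fun t => (SignType.sign t : ℝ)) B * cfc (fun t => (SignType.sign t : ℝ)) B *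
      cfc (fun t => √|t|) B = cfc (fun t => √|t|) B := by
  have hfin := B.finite_real_spectrum
  rw [← cfc_mul (hf := hfin.continuousOn _) (hg := hfin.continuousOn _),
    ← cfc_mul (hf := hfin.continuousOn _) (hg := hfin.continuousOn _)]
  refine cfc_congr fun t _ => ?_
  rcases lt_trichotomy t 0 with ht | rfl | ht <;> simp [*]

lemma cfc_sqrt_abs_mul_self (hB : IsSelfAdjoint B) :
    cfc (fun t => √|t|) B * cfc (fun t => √|t|) B = CFC.abs B := by
  rw [← cfc_mul .., CFC.abs_eq_cfc_norm B]
  exact cfc_congr fun t _ => Real.mul_self_sqrt (abs_nonneg t)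

end Matrix

lemma matAbs_eq_abs {n : ℕ} (B : Matrix (Fin n) (Fin n) ℝ) : matAbs B = CFC.abs B := by
  have hB := posSemidef_conjTranspose_mul_self B
  rw [CFC.abs, CFC.sqrt_eq_cfc, star_eq_conjTranspose, cfc_nnreal_eq_real _ _ hB.nonneg,
    hB.1.cfc_eq]
  simp only [matAbs, conjTranspose_eq_transpose_of_trivial, IsHermitian.cfc,
    RCLike.ofReal_real_eq_id, Real.coe_sqrt, Real.coe_toNNReal', CompTriple.comp_eq,
    Unitary.conjStarAlgAut_apply]
  congr 3 with i
  exact congrArg _ (max_eq_left (hB.eigenvalues_nonneg i)).symm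

theorem trace_product_bound {n : ℕ} (A₁ A₂ B : Matrix (Fin n) (Fin n) ℝ)
    (hA₁ : A₁.PosSemidef) (hA₂ : A₂.PosSemidef) (hB : B.IsSymm) :
    (A₁ * B * A₂ * B).trace ≤ (A₁ * matAbs B).trace * (A₂ * matAbs B).trace := by
  have hB' : IsSelfAdjoint B := isHermitian_iff_isSymm.mpr hB
  rw [matAbs_eq_abs, ← cfc_sqrt_abs_mul_self hB']
  exact hA₁.trace_mul_mul_mul_le_of_eq_mul_mul hA₂ (cfc_predicate _ B) (cfc_predicate _ B)
    (cfc_sqrt_abs_mul_cfc_sign_mul_cfc_sqrt_abs hB').symm cfc_sign_mul_cfc_sign_mul_cfc_sqrt_abs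
end

section
/- For m ≥ 7, if y ∼ N(0, I_m), then E[‖y‖₂² | ‖y‖₂ ≤ m] ≥ (1 − 2^{-m})·m. -/
/-!
Since `E‖y‖² = m` and the conditional expectation over the ball `{‖y‖ ≤ m}` is at least the
restricted integral, it suffices to show that the tail `E[‖y‖²; ‖y‖² > m²]` is at most `2⁻ᵐ m`.
This is a Chernoff bound: on the tail, `‖y‖² ≤ 8 e^{‖y‖²/8} ≤ 8 e^{-m²/4} e^{3‖y‖²/8}`, and
`E e^{3‖y‖²/8} = 2ᵐ` because `E e^{t x²} = (1 - 2t)^{-1/2}` for a standard Gaussian `x`.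
-/

open MeasureTheory

/-- The standard Gaussian measure `N(0, I_m)` on `ℝᵐ`. -/
noncomputable def stdGaussian (m : ℕ) : Measure (Fin m → ℝ) :=
  Measure.pi fun _ => ProbabilityTheory.gaussianReal 0 1

open Real NNReal

lemma setIntegral_lt_le_mul_integral_exp {α : Type*} [MeasurableSpace α] {μ : Measure α}
    {f : α → ℝ} (hf : Measurable f) {a s t : ℝ} (ha : 0 ≤ a) (hs : 0 < s) (ht : 0 ≤ t)
    (hexp : Integrable (fun x ↦ exp ((s + t) * f x)) μ) :
    ∫ x in {x | a < f x}, f x ∂μ ≤ s⁻¹ * exp (-(t * a)) * ∫ x, exp ((s + t) * f x) ∂μ := by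
  have hset : MeasurableSet {x | a < f x} := measurableSet_lt measurable_const hf
  have hpoint : ∀ x ∈ {x | a < f x}, f x ≤ s⁻¹ * exp (-(t * a)) * exp ((s + t) * f x) := by
    intro x (hx : a < f x)
    have hlin : s * f x ≤ exp (s * f x) :=
      (le_add_of_nonneg_right zero_le_one).trans (add_one_le_exp _)
    have hgrowth : 1 ≤ exp (t * (f x - a)) := one_le_exp (by nlinarith)
    calc f x = s⁻¹ * (s * f x) := by field_simp
      _ ≤ s⁻¹ * exp (s * f x) := by gcongr
      _ ≤ s⁻¹ * exp (s * f x) * exp (t * (f x - a)) :=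
          le_mul_of_one_le_right (by positivity) hgrowth
      _ = s⁻¹ * exp (-(t * a)) * exp ((s + t) * f x) := by
          rw [mul_assoc, mul_assoc, ← exp_add, ← exp_add]; ring_nf
  calc ∫ x in {x | a < f x}, f x ∂μ
      ≤ ∫ x in {x | a < f x}, s⁻¹ * exp (-(t * a)) * exp ((s + t) * f x) ∂μ :=
        integral_mono_of_nonneg (ae_restrict_of_forall_mem hset fun x hx ↦ ha.trans hx.le)
          (hexp.const_mul _).integrableOn (ae_restrict_of_forall_mem hset hpoint)
    _ ≤ ∫ x, s⁻¹ * exp (-(t * a)) * exp ((s + t) * f x) ∂μ :=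
        setIntegral_le_integral (hexp.const_mul _) (ae_of_all _ fun _ ↦ by positivity)
    _ = s⁻¹ * exp (-(t * a)) * ∫ x, exp ((s + t) * f x) ∂μ := integral_const_mul _ _

namespace ProbabilityTheory

lemma setIntegral_le_integral_cond {α : Type*} [MeasurableSpace α] {μ : Measure α}
    [IsZeroOrProbabilityMeasure μ] {s : Set α} {f : α → ℝ} (hf : 0 ≤ ∫ x in s, f x ∂μ) :
    ∫ x in s, f x ∂μ ≤ ∫ x, f x ∂(μ[|s]) := by
  rw [cond, integral_smul_measure, ENNReal.toReal_inv, smul_eq_mul]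
  rcases eq_or_ne (μ s) 0 with hs | hs
  · simp [Measure.restrict_eq_zero.mpr hs]
  · refine le_mul_of_one_le_left hf (one_le_inv_iff₀.mpr ⟨?_, ?_⟩)
    · exact ENNReal.toReal_pos hs (measure_ne_top _ _)
    · exact ENNReal.toReal_le_of_le_ofReal zero_le_one (by simpa using prob_le_one)

lemma integrable_gaussianReal_iff {μ : ℝ} {v : ℝ≥0} (hv : v ≠ 0) {f : ℝ → ℝ} :
    Integrable f (gaussianReal μ v) ↔ Integrable (fun x ↦ gaussianPDFReal μ v x * f x) := by
  rw [gaussianReal_of_var_ne_zero μ hv, integrable_withDensity_iff_integrable_smul'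
    (measurable_gaussianPDF μ v) (ae_of_all _ fun _ ↦ gaussianPDF_lt_top)]
  simp only [toReal_gaussianPDF, smul_eq_mul]

lemma gaussianPDFReal_zero_mul_exp_mul_sq (v : ℝ≥0) (t x : ℝ) :
    gaussianPDFReal 0 v x * exp (t * x ^ 2)
      = (√(2 * π * v))⁻¹ * exp (-((1 - 2 * t * v) / (2 * v)) * x ^ 2) := by
  rcases eq_or_ne v 0 with rfl | hv
  · simp
  rw [gaussianPDFReal, mul_assoc, ← exp_add]
  congr 2
  field_simp
  ring

lemma integrable_exp_mul_sq_gaussianReal {v : ℝ≥0} {t : ℝ} (ht : t * v < 1 / 2) :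
    Integrable (fun x ↦ exp (t * x ^ 2)) (gaussianReal 0 v) := by
  rcases eq_or_ne v 0 with rfl | hv
  · rw [gaussianReal_zero_var]
    exact integrable_dirac enorm_lt_top
  have hb : 0 < (1 - 2 * t * v) / (2 * v) := by
    have : 0 < (v : ℝ) := by positivity
    apply div_pos <;> linarith
  rw [integrable_gaussianReal_iff hv]
  simp_rw [gaussianPDFReal_zero_mul_exp_mul_sq]
  exact (integrable_exp_neg_mul_sq hb).const_mul _

lemma integral_exp_mul_sq_gaussianReal {v : ℝ≥0} {t : ℝ} (ht : t * v < 1 / 2) :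
    ∫ x, exp (t * x ^ 2) ∂gaussianReal 0 v = (√(1 - 2 * t * v))⁻¹ := by
  rcases eq_or_ne v 0 with rfl | hv
  · simp [gaussianReal_zero_var]
  have hv' : 0 < (v : ℝ) := by positivity
  have hpos : 0 < 1 - 2 * t * v := by linarith
  rw [integral_gaussianReal_eq_integral_smul hv]
  simp_rw [smul_eq_mul, gaussianPDFReal_zero_mul_exp_mul_sq]
  rw [integral_const_mul, integral_gaussian, div_div_eq_mul_div, sqrt_div' _ hpos.le]
  field_simp

lemma integrable_sq_gaussianReal (μ : ℝ) (v : ℝ≥0) :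
    Integrable (fun x ↦ x ^ 2) (gaussianReal μ v) :=
  (memLp_id_gaussianReal 2).integrable_sq

lemma integral_sq_gaussianReal (v : ℝ≥0) : ∫ x, x ^ 2 ∂gaussianReal 0 v = v := by
  simpa [integral_id_gaussianReal] using
    (variance_eq_integral measurable_id.aemeasurable (μ := gaussianReal 0 v)).symm.trans
      variance_id_gaussianReal

end ProbabilityTheory

open ProbabilityTheory (integrable_sq_gaussianReal integral_sq_gaussianReal
  integrable_exp_mul_sq_gaussianReal integral_exp_mul_sq_gaussianReal setIntegral_le_integral_cond)

instance isProbabilityMeasure_stdGaussian (m : ℕ) : IsProbabilityMeasure (stdGaussian m) := by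
  unfold stdGaussian
  infer_instance

lemma integrable_sum_sq_stdGaussian (m : ℕ) :
    Integrable (fun y : Fin m → ℝ ↦ ∑ i, y i ^ 2) (stdGaussian m) := by
  unfold stdGaussian
  exact integrable_finsetSum _ fun _ _ ↦
    integrable_comp_eval (f := fun x ↦ x ^ 2) (integrable_sq_gaussianReal 0 1)

lemma integral_sum_sq_stdGaussian (m : ℕ) : ∫ y, ∑ i, y i ^ 2 ∂stdGaussian m = m := by
  unfold stdGaussian
  have hint (i : Fin m) : Integrable (fun y : Fin m → ℝ ↦ y i ^ 2)
      (Measure.pi fun _ ↦ ProbabilityTheory.gaussianReal 0 1) :=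
    integrable_comp_eval (f := fun x ↦ x ^ 2) (integrable_sq_gaussianReal 0 1)
  have hcoord (i : Fin m) :
      ∫ y : Fin m → ℝ, y i ^ 2 ∂(Measure.pi fun _ ↦ ProbabilityTheory.gaussianReal 0 1) = 1 := by
    rw [integral_comp_eval (μ := fun _ ↦ ProbabilityTheory.gaussianReal 0 1) (f := fun x ↦ x ^ 2)
      (continuous_pow 2).aestronglyMeasurable, integral_sq_gaussianReal, NNReal.coe_one]
  simp [integral_finsetSum _ fun i _ ↦ hint i, hcoord]

lemma integrable_exp_mul_sum_sq_stdGaussian (m : ℕ) {t : ℝ} (ht : t < 1 / 2) :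
    Integrable (fun y : Fin m → ℝ ↦ exp (t * ∑ i, y i ^ 2)) (stdGaussian m) := by
  unfold stdGaussian
  simp_rw [Finset.mul_sum, exp_sum]
  exact Integrable.fintype_prod fun _ ↦
    integrable_exp_mul_sq_gaussianReal (v := 1) (by simpa using ht)

lemma integral_exp_mul_sum_sq_stdGaussian (m : ℕ) {t : ℝ} (ht : t < 1 / 2) :
    ∫ y, exp (t * ∑ i, y i ^ 2) ∂stdGaussian m = (√(1 - 2 * t))⁻¹ ^ m := by
  unfold stdGaussian
  simp_rw [Finset.mul_sum, exp_sum]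
  rw [integral_fintype_prod_eq_pow (fun x ↦ exp (t * x ^ 2)),
    integral_exp_mul_sq_gaussianReal (v := 1) (by simpa using ht)]
  simp

lemma eight_mul_four_pow_le_exp {m : ℕ} (hm : 7 ≤ m) : 8 * 4 ^ m ≤ exp ((m : ℝ) ^ 2 / 4) := by
  have hm' : (7 : ℝ) ≤ m := by exact_mod_cast hm
  have h : (8 : ℝ) * 4 ^ m = exp (log 2 * ((2 * m + 3 : ℕ) : ℝ)) := by
    rw [← rpow_def_of_pos two_pos, Real.rpow_natCast, pow_add, pow_mul]; norm_num; ring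
  rw [h, exp_le_exp]
  push_cast
  nlinarith [log_two_lt_d9]

lemma eight_mul_exp_mul_two_pow_le {m : ℕ} (hm : 7 ≤ m) :
    8 * exp (-((m : ℝ) ^ 2 / 4)) * 2 ^ m ≤ 2⁻¹ ^ m * m := by
  have hm' : (1 : ℝ) ≤ m := by exact_mod_cast (by omega : 1 ≤ m)
  rw [exp_neg, inv_pow, ← div_eq_inv_mul, le_div_iff₀ (by positivity)]
  calc 8 * (exp ((m : ℝ) ^ 2 / 4))⁻¹ * 2 ^ m * 2 ^ m = 8 * 4 ^ m / exp ((m : ℝ) ^ 2 / 4) := by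
        rw [show (4 : ℝ) ^ m = 2 ^ m * 2 ^ m by rw [← mul_pow]; norm_num]; ring
    _ ≤ 1 := (div_le_one (exp_pos _)).mpr (eight_mul_four_pow_le_exp hm)
    _ ≤ m := hm'

lemma setIntegral_tail_sum_sq_stdGaussian_le {m : ℕ} (hm : 7 ≤ m) :
    ∫ y in {y : Fin m → ℝ | (m : ℝ) ^ 2 < ∑ i, y i ^ 2}, ∑ i, y i ^ 2 ∂stdGaussian m
      ≤ 2⁻¹ ^ m * m := by
  have hroot : √(1 - 2 * (1 / 8 + 1 / 4) : ℝ) = 2⁻¹ := by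
    rw [show (1 - 2 * (1 / 8 + 1 / 4) : ℝ) = 2⁻¹ ^ 2 by norm_num, Real.sqrt_sq (by norm_num)]
  calc _ ≤ (1 / 8)⁻¹ * exp (-(1 / 4 * (m : ℝ) ^ 2))
          * ∫ y, exp ((1 / 8 + 1 / 4) * ∑ i, y i ^ 2) ∂stdGaussian m :=
        setIntegral_lt_le_mul_integral_exp (by fun_prop) (by positivity) (by norm_num)
          (by norm_num) (integrable_exp_mul_sum_sq_stdGaussian m (by norm_num))
    _ = 8 * exp (-((m : ℝ) ^ 2 / 4)) * 2 ^ m := by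
        rw [integral_exp_mul_sum_sq_stdGaussian m (by norm_num), hroot, inv_inv]
        ring_nf
    _ ≤ 2⁻¹ ^ m * m := eight_mul_exp_mul_two_pow_le hm

theorem gaussian_cond_norm_sq {m : ℕ} (hm : 7 ≤ m) :
    (1 - (2⁻¹ : ℝ) ^ m) * m ≤
      ∫ y, (∑ i, (y i) ^ 2)
        ∂(ProbabilityTheory.cond (stdGaussian m) {y | Real.sqrt (∑ i, (y i) ^ 2) ≤ m}) := by
  set f : (Fin m → ℝ) → ℝ := fun y ↦ ∑ i, y i ^ 2
  set ball : Set (Fin m → ℝ) := {y | f y ≤ (m : ℝ) ^ 2}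
  have hball : MeasurableSet ball := measurableSet_le (by fun_prop) measurable_const
  have hsqrt : {y | √(f y) ≤ m} = ball := by
    ext y; exact sqrt_le_left (Nat.cast_nonneg m)
  have hcompl : ballᶜ = {y | (m : ℝ) ^ 2 < f y} := by
    ext y; simp [ball]
  have hsplit := integral_add_compl hball (integrable_sum_sq_stdGaussian m)
  rw [hcompl, integral_sum_sq_stdGaussian] at hsplit
  rw [hsqrt]
  calc (1 - (2⁻¹ : ℝ) ^ m) * m ≤ ∫ y in ball, f y ∂stdGaussian m := by
        linarith [setIntegral_tail_sum_sq_stdGaussian_le hm]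
    _ ≤ _ := setIntegral_le_integral_cond (setIntegral_nonneg hball fun y _ ↦ by positivity)
end
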